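/- arXiv:2208.00153 — 9 statements merged into one kernel-verified Lean document; each statement's English description precedes it below -/
import Mathlib

section
/- Let γ, α, β, δ, ξ > 0 with β − δα > 0, β > δ and ξ > δ/(β − δα). Let x, y : [0,∞) → ℝ be a differentiable solution of system (AF) with x(0) > 0 and y(0) > 0. Then the solution blows up in infinite time: x(t) → 0 and y(t) → ∞ as t → ∞. -/
/-!
Both populations stay positive: each equation has the form `f' = f h` with `h` bounded below on
compact time intervals, so `f` stays above a decaying exponential. Since
`β (x + ξ) / (1 + αξ + x) ≥ min (βξ / (1 + αξ)) β > δ` for `x ≥ 0`, the predator then grows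
exponentially. The prey never exceeds `M = max γ (x 0)`, so once `y ≥ 2 (1 + αξ + M)`
predation forces `x' ≤ -x`, and `x` decays exponentially.
-/

open Set Filter Real Topology

theorem le_mul_exp_of_hasDerivAt_le {f f' : ℝ → ℝ} {a t₀ t : ℝ} (ht : t₀ ≤ t)
    (hf : ∀ s ∈ Icc t₀ t, HasDerivAt f (f' s) s) (hle : ∀ s ∈ Ico t₀ t, f' s ≤ a * f s) :
    f t ≤ f t₀ * exp (a * (t - t₀)) := by
  have key := le_gronwallBound_of_liminf_deriv_right_le (ε := 0)
    (fun s hs => (hf s hs).continuousAt.continuousWithinAt)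
    (fun s hs _ hr => (hf s (Ico_subset_Icc_self hs)).hasDerivWithinAt.liminf_right_slope_le hr)
    le_rfl (fun s hs => (add_zero (a * f s)).symm ▸ hle s hs) t ⟨ht, le_rfl⟩
  rwa [gronwallBound_ε0] at key

theorem pos_of_hasDerivAt_mul {f h : ℝ → ℝ} {K T : ℝ}
    (hf : ∀ t ∈ Icc 0 T, HasDerivAt f (f t * h t) t) (hh : ∀ t ∈ Ico 0 T, 0 < f t → -K ≤ h t)
    (h0 : 0 < f 0) (hT : 0 ≤ T) : 0 < f T := by
  -- compare with the barrier `f 0 * exp (-(K + 1) * t)`, whose decay rate strictly beats `-K`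
  have hb : ∀ t, HasDerivAt (fun t => -(f 0 * exp (-(K + 1) * t)))
      ((K + 1) * (f 0 * exp (-(K + 1) * t))) t := fun t =>
    (((hasDerivAt_id t).const_mul (-(K + 1))).exp.const_mul (f 0)).neg.congr_deriv
      (by simp only [id]; ring)
  have key := image_le_of_deriv_right_lt_deriv_boundary (f := fun t => -f t)
    (fun t ht => (hf t ht).continuousAt.neg.continuousWithinAt)
    (fun t ht => (hf t (Ico_subset_Icc_self ht)).neg.hasDerivWithinAt)
    (by simp) hb (fun t ht heq => by
      have hft : f t = f 0 * exp (-(K + 1) * t) := neg_injective heq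
      have hpos : 0 < f t := hft ▸ by positivity
      rw [← hft]
      nlinarith [mul_le_mul_of_nonneg_left (hh t ht hpos) hpos.le]) (right_mem_Icc.2 hT)
  have : 0 < f 0 * exp (-(K + 1) * T) := by positivity
  linarith

theorem min_div_le_mul_add_div_add {β e c s : ℝ} (hc : 0 < c) (hs : 0 ≤ s) :
    min (e / c) β ≤ (β * s + e) / (c + s) := by
  have hmc : min (e / c) β * c ≤ e := (le_div_iff₀ hc).1 (min_le_left _ _)
  rw [le_div_iff₀ (by positivity)]
  nlinarith [mul_le_mul_of_nonneg_right (min_le_right (e / c) β) hs]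

/-- Solutions of (AF) on `[0, ∞)`, with `c = 1 + αξ` and `e = βξ`. -/
structure IsAFSolution (γ c β e δ : ℝ) (x y : ℝ → ℝ) : Prop where
  hasDerivAt_x : ∀ t, 0 ≤ t → HasDerivAt x (x t * (1 - x t / γ) - x t * y t / (c + x t)) t
  hasDerivAt_y : ∀ t, 0 ≤ t →
    HasDerivAt y (β * x t * y t / (c + x t) + e * y t / (c + x t) - δ * y t) t

namespace IsAFSolution

variable {γ c β e δ : ℝ} {x y : ℝ → ℝ}

theorem x_pos (hs : IsAFSolution γ c β e δ x y) (hc : 0 < c) (hx0 : 0 < x 0) {t : ℝ}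
    (ht : 0 ≤ t) : 0 < x t := by
  obtain ⟨A, hA⟩ := isCompact_Icc.exists_bound_of_continuousOn (f := fun s => x s / γ)
    (fun s hs' => ((hs.hasDerivAt_x s hs'.1).continuousAt.div_const γ).continuousWithinAt)
  obtain ⟨Y, hY⟩ := isCompact_Icc.exists_bound_of_continuousOn (f := y)
    (fun s hs' => (hs.hasDerivAt_y s hs'.1).continuousAt.continuousWithinAt)
  refine pos_of_hasDerivAt_mul (h := fun s => 1 - x s / γ - y s / (c + x s)) (K := A + Y / c - 1)
    (fun s hs' => (hs.hasDerivAt_x s hs'.1).congr_deriv (by ring)) (fun s hs' hxs => ?_) hx0 ht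
  have hA' : x s / γ ≤ A := (le_abs_self _).trans (hA s (Ico_subset_Icc_self hs'))
  have hY' : |y s| ≤ Y := hY s (Ico_subset_Icc_self hs')
  have hyc : y s / (c + x s) ≤ Y / c :=
    calc y s / (c + x s) ≤ |y s| / (c + x s) := by gcongr; exact le_abs_self _
      _ ≤ Y / c := by gcongr <;> linarith [abs_nonneg (y s)]
  linarith

theorem y_pos (hs : IsAFSolution γ c β e δ x y) (hc : 0 < c) (hx : ∀ t, 0 ≤ t → 0 < x t)
    (hy0 : 0 < y 0) {t : ℝ} (ht : 0 ≤ t) : 0 < y t :=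
  pos_of_hasDerivAt_mul (h := fun s => (β * x s + e) / (c + x s) - δ) (K := δ - min (e / c) β)
    (fun s hs' => (hs.hasDerivAt_y s hs'.1).congr_deriv (by ring))
    (fun s hs' _ => by
      have := min_div_le_mul_add_div_add (β := β) (e := e) hc (hx s hs'.1).le
      linarith) hy0 ht

theorem x_le_max (hs : IsAFSolution γ c β e δ x y) (hγ : 0 < γ) (hc : 0 < c)
    (hy : ∀ t, 0 ≤ t → 0 < y t) {t : ℝ} (ht : 0 ≤ t) :
    x t ≤ max γ (x 0) := by
  set M := max γ (x 0)
  have hM : 0 < M := hγ.trans_le (le_max_left _ _)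
  refine image_le_of_deriv_right_lt_deriv_boundary
    (fun s hs' => (hs.hasDerivAt_x s hs'.1).continuousAt.continuousWithinAt)
    (fun s hs' => (hs.hasDerivAt_x s hs'.1).hasDerivWithinAt) (le_max_right _ _)
    (fun _ => hasDerivAt_const _ M) (fun s hs' hxs => ?_) (right_mem_Icc.2 ht)
  have hlogistic : M * (1 - M / γ) ≤ 0 :=
    mul_nonpos_of_nonneg_of_nonpos hM.le (sub_nonpos.2 ((one_le_div hγ).2 (le_max_left _ _)))
  have hpredation : 0 < M * y s / (c + M) := by have := hy s hs'.1; positivity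
  rw [hxs]
  linarith

theorem le_y (hs : IsAFSolution γ c β e δ x y) (hc : 0 < c) (hx : ∀ t, 0 ≤ t → 0 < x t)
    (hy : ∀ t, 0 ≤ t → 0 < y t) {t : ℝ} (ht : 0 ≤ t) :
    y 0 * exp ((min (e / c) β - δ) * t) ≤ y t := by
  have key := le_mul_exp_of_hasDerivAt_le (f := fun s => -y s) (a := min (e / c) β - δ) ht
    (fun s hs' => (hs.hasDerivAt_y s hs'.1).neg) (fun s hs' => ?_)
  · simp only [sub_zero] at key
    linarith
  have hrate := min_div_le_mul_add_div_add (β := β) (e := e) hc (hx s hs'.1).le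
  have hys := hy s hs'.1
  have hfac : β * x s * y s / (c + x s) + e * y s / (c + x s) - δ * y s
      = y s * ((β * x s + e) / (c + x s) - δ) := by ring
  rw [hfac]
  nlinarith

theorem tendsto_y_atTop (hs : IsAFSolution γ c β e δ x y) (hc : 0 < c)
    (hx : ∀ t, 0 ≤ t → 0 < x t) (hy : ∀ t, 0 ≤ t → 0 < y t) (hδ : δ < min (e / c) β) :
    Tendsto y atTop atTop := by
  refine tendsto_atTop_mono' atTop ?_ ((tendsto_exp_atTop.comp
    (tendsto_id.const_mul_atTop (sub_pos.2 hδ))).const_mul_atTop (hy 0 le_rfl))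
  filter_upwards [eventually_ge_atTop 0] with t ht using hs.le_y hc hx hy ht

theorem tendsto_x_zero (hs : IsAFSolution γ c β e δ x y) (hγ : 0 < γ) (hc : 0 < c)
    (hx : ∀ t, 0 ≤ t → 0 < x t) (hy : ∀ t, 0 ≤ t → 0 < y t) (hy_top : Tendsto y atTop atTop) :
    Tendsto x atTop (𝓝 0) := by
  set M := max γ (x 0)
  obtain ⟨T, hT⟩ := eventually_atTop.1
    ((hy_top.eventually_ge_atTop (2 * (c + M))).and (eventually_ge_atTop 0))
  have hT0 : 0 ≤ T := (hT T le_rfl).2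
  -- once `y ≥ 2 (c + M)`, predation beats the logistic growth: `x' ≤ -x`
  have hdecay : ∀ t, T ≤ t → x t ≤ x T * exp (-1 * (t - T)) := fun t ht =>
    le_mul_exp_of_hasDerivAt_le ht (fun s hs' => hs.hasDerivAt_x s (hT0.trans hs'.1))
      (fun s hs' => by
        have hs0 : 0 ≤ s := hT0.trans hs'.1
        have hxs := hx s hs0
        have hxM := hs.x_le_max hγ hc hy hs0
        have hlogistic : 0 ≤ x s * (x s / γ) := by positivity
        have hpredation : 2 ≤ y s / (c + x s) := by
          rw [le_div_iff₀ (by linarith)]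
          linarith [(hT s hs'.1).1]
        rw [mul_div_assoc]
        nlinarith)
  have hexp : Tendsto (fun t => x T * exp (-1 * (t - T))) atTop (𝓝 0) := by
    have h := (tendsto_exp_neg_atTop_nhds_zero.comp
      (tendsto_atTop_add_const_right atTop (-T) tendsto_id)).const_mul (x T)
    rw [mul_zero] at h
    refine h.congr fun t => ?_
    simp only [Function.comp_apply, id]
    ring_nf
  refine tendsto_of_tendsto_of_tendsto_of_le_of_le' tendsto_const_nhds hexp ?_ ?_
  · filter_upwards [eventually_ge_atTop 0] with t ht using (hx t ht).le
  · filter_upwards [eventually_ge_atTop T] with t ht using hdecay t ht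

end IsAFSolution

theorem stmt_0_general (γ α β δ ξ : ℝ)
    (hγ : 0 < γ) (hα : 0 < α) (hξ : 0 < ξ)
    (hqual : 0 < β - δ * α) (hβδ : δ < β)
    (hcrit : δ / (β - δ * α) < ξ)
    (x y : ℝ → ℝ)
    (hx : ∀ t : ℝ, 0 ≤ t →
      HasDerivAt x (x t * (1 - x t / γ) - x t * y t / (1 + α * ξ + x t)) t)
    (hy : ∀ t : ℝ, 0 ≤ t →
      HasDerivAt y (β * x t * y t / (1 + α * ξ + x t)
        + β * ξ * y t / (1 + α * ξ + x t) - δ * y t) t)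
    (hx0 : 0 < x 0) (hy0 : 0 < y 0) :
    Filter.Tendsto x Filter.atTop (nhds 0) ∧
      Filter.Tendsto y Filter.atTop Filter.atTop := by
  have hc : 0 < 1 + α * ξ := by positivity
  have hδ : δ < min (β * ξ / (1 + α * ξ)) β := by
    refine lt_min ?_ hβδ
    rw [lt_div_iff₀ hc]
    linarith [(div_lt_iff₀ hqual).1 hcrit]
  have hs : IsAFSolution γ (1 + α * ξ) β (β * ξ) δ x y := ⟨hx, hy⟩
  have hx_pos : ∀ t, 0 ≤ t → 0 < x t := fun _ => hs.x_pos hc hx0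
  have hy_pos : ∀ t, 0 ≤ t → 0 < y t := fun _ => hs.y_pos hc hx_pos hy0
  have hy_top := hs.tendsto_y_atTop hc hx_pos hy_pos hδ
  exact ⟨hs.tendsto_x_zero hγ hc hx_pos hy_pos hy_top, hy_top⟩

/-- **Theorem thm:t1ug.**
For the additional-food predator-pest system (AF)
  dx/dt = x(1 − x/γ) − x y/(1 + αξ + x),
  dy/dt = β x y/(1 + αξ + x) + β ξ y/(1 + αξ + x) − δ y,
with γ, α, β, δ, ξ > 0, β − δα > 0, β > δ and ξ > δ/(β − δα), every solution
with positive initial data blows up in infinite time: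
x(t) → 0 and y(t) → ∞ as t → ∞. -/
theorem stmt_0 (γ α β δ ξ : ℝ)
    (hγ : 0 < γ) (hα : 0 < α) (hβ : 0 < β) (hδ : 0 < δ) (hξ : 0 < ξ)
    (hqual : 0 < β - δ * α) (hβδ : δ < β)
    (hcrit : δ / (β - δ * α) < ξ)
    (x y : ℝ → ℝ)
    (hx : ∀ t : ℝ, 0 ≤ t →
      HasDerivAt x (x t * (1 - x t / γ) - x t * y t / (1 + α * ξ + x t)) t)
    (hy : ∀ t : ℝ, 0 ≤ t →
      HasDerivAt y (β * x t * y t / (1 + α * ξ + x t)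
        + β * ξ * y t / (1 + α * ξ + x t) - δ * y t) t)
    (hx0 : 0 < x 0) (hy0 : 0 < y 0) :
    Filter.Tendsto x Filter.atTop (nhds 0) ∧
      Filter.Tendsto y Filter.atTop Filter.atTop :=
  stmt_0_general γ α β δ ξ hγ hα hξ hqual hβδ hcrit x y hx hy hx0 hy0
end

section
/- Let γ, α, β, δ, ξ, c > 0 with β − δα > 0 and ξ > δ/(β − δα). Then every solution x, y : [0,∞) → ℝ of system (AFC) with x(0) > 0, y(0) > 0 remains bounded for all time: there exists M > 0 such that 0 ≤ x(t) ≤ M and 0 ≤ y(t) ≤ M for all t ≥ 0. -/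
set_option maxHeartbeats 1000000


/-- If `f 0 ≤ M` and the derivative of `f` is nonpositive wherever `f > M` (on `[0,∞)`),
then `f ≤ M` on `[0,∞)`. -/
lemma barrier_lemma (f g : ℝ → ℝ) (M : ℝ)
    (hf : ∀ t : ℝ, 0 ≤ t → HasDerivAt f (g t) t)
    (h0 : f 0 ≤ M) (hg : ∀ t : ℝ, 0 ≤ t → M < f t → g t ≤ 0) :
    ∀ t : ℝ, 0 ≤ t → f t ≤ M := by
  intro t1 ht1
  by_contra hlt
  push_neg at hlt
  have hcont : ContinuousOn f (Set.Icc 0 t1) :=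
    fun u hu => ((hf u hu.1).continuousAt).continuousWithinAt
  set S : Set ℝ := Set.Icc 0 t1 ∩ f ⁻¹' Set.Iic M with hS
  have hSclosed : IsClosed S :=
    hcont.preimage_isClosed_of_isClosed isClosed_Icc isClosed_Iic
  have hSne : S.Nonempty := ⟨0, ⟨le_refl 0, ht1⟩, h0⟩
  have hSbdd : BddAbove S := ⟨t1, fun u hu => hu.1.2⟩
  set s := sSup S with hs
  have hsS : s ∈ S := hSclosed.csSup_mem hSne hSbdd
  have hs0 : 0 ≤ s := hsS.1.1
  have hst1 : s ≤ t1 := hsS.1.2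
  have hfs : f s ≤ M := hsS.2
  have hsne : s ≠ t1 := by
    intro h; rw [h] at hfs; exact absurd hfs (not_le.2 hlt)
  have hslt : s < t1 := lt_of_le_of_ne hst1 hsne
  have hanti : AntitoneOn f (Set.Icc s t1) := by
    apply antitoneOn_of_hasDerivWithinAt_nonpos (convex_Icc s t1)
      (hcont.mono (Set.Icc_subset_Icc_left hs0)) (f' := g)
    · intro u hu
      rw [interior_Icc] at hu
      exact ((hf u (le_trans hs0 hu.1.le)).hasDerivWithinAt)
    · intro u hu
      rw [interior_Icc] at hu
      have hu0 : 0 ≤ u := le_trans hs0 hu.1.le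
      have hMu : M < f u := by
        by_contra hM
        push_neg at hM
        have : u ∈ S := ⟨⟨hu0, hu.2.le⟩, hM⟩
        exact absurd (le_csSup hSbdd this) (not_le.2 hu.1)
      exact hg u hu0 hMu
  have := hanti (Set.left_mem_Icc.2 hslt.le) (Set.right_mem_Icc.2 hslt.le) hslt.le
  linarith


lemma pos_lemma (γ α β δ ξ c : ℝ)
    (hγ : 0 < γ) (hα : 0 < α) (hβ : 0 < β) (hδ : 0 < δ) (hξ : 0 < ξ) (hc : 0 < c)
    (x y : ℝ → ℝ)
    (hx : ∀ t : ℝ, 0 ≤ t →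
      HasDerivAt x (x t * (1 - x t / γ) - x t * y t / (1 + α * ξ + x t)) t)
    (hy : ∀ t : ℝ, 0 ≤ t →
      HasDerivAt y (β * x t * y t / (1 + α * ξ + x t)
        + β * ξ * y t / (1 + α * ξ + x t) - δ * y t - c * ξ * (y t) ^ 2) t)
    (hx0 : 0 < x 0) (hy0 : 0 < y 0) :
    ∀ t : ℝ, 0 ≤ t → 0 < x t ∧ 0 < y t := by
  have hcx : ContinuousOn x (Set.Ici 0) :=
    fun u hu => ((hx u hu).continuousAt).continuousWithinAt
  have hcy : ContinuousOn y (Set.Ici 0) :=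
    fun u hu => ((hy u hu).continuousAt).continuousWithinAt
  by_contra hcon
  push_neg at hcon
  obtain ⟨t0, ht0, hbad⟩ := hcon
  set S : Set ℝ := (Set.Ici 0 ∩ x ⁻¹' Set.Iic 0) ∪ (Set.Ici 0 ∩ y ⁻¹' Set.Iic 0) with hSdef
  have hSclosed : IsClosed S :=
    IsClosed.union
      (hcx.preimage_isClosed_of_isClosed isClosed_Ici isClosed_Iic)
      (hcy.preimage_isClosed_of_isClosed isClosed_Ici isClosed_Iic)
  have hSne : S.Nonempty := by
    refine ⟨t0, ?_⟩
    rcases le_or_gt (x t0) 0 with h | h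
    · exact Or.inl ⟨ht0, h⟩
    · exact Or.inr ⟨ht0, hbad h⟩
  have hSbdd : BddBelow S := ⟨0, fun u hu => by rcases hu with h | h <;> exact h.1⟩
  set T := sInf S with hT
  have hTS : T ∈ S := hSclosed.csInf_mem hSne hSbdd
  have hT0 : 0 ≤ T := by rcases hTS with h | h <;> exact h.1
  have hTpos : 0 < T := by
    rcases hT0.lt_or_eq with h | h
    · exact h
    · exfalso
      rcases hTS with hmem | hmem
      · rw [← h] at hmem; exact absurd hmem.2 (not_le.2 hx0)
      · rw [← h] at hmem; exact absurd hmem.2 (not_le.2 hy0)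
  have hbefore : ∀ u : ℝ, 0 ≤ u → u < T → 0 < x u ∧ 0 < y u := by
    intro u hu0 huT
    constructor
    · by_contra h; push_neg at h
      exact absurd (csInf_le hSbdd (Or.inl ⟨hu0, h⟩)) (not_le.2 huT)
    · by_contra h; push_neg at h
      exact absurd (csInf_le hSbdd (Or.inr ⟨hu0, h⟩)) (not_le.2 huT)
  -- bound on [0, T]
  have hIcc : Set.Icc (0:ℝ) T ⊆ Set.Ici 0 := fun u hu => hu.1
  obtain ⟨C1, hC1⟩ := isCompact_Icc.exists_bound_of_continuousOn (hcx.mono hIcc)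
  obtain ⟨C2, hC2⟩ := isCompact_Icc.exists_bound_of_continuousOn (hcy.mono hIcc)
  set C := max C1 C2 with hCdef
  have hxC : ∀ u ∈ Set.Icc (0:ℝ) T, x u ≤ C := fun u hu =>
    le_trans (le_trans (le_abs_self _) (by simpa [Real.norm_eq_abs] using hC1 u hu)) (le_max_left _ _)
  have hyC : ∀ u ∈ Set.Icc (0:ℝ) T, y u ≤ C := fun u hu =>
    le_trans (le_trans (le_abs_self _) (by simpa [Real.norm_eq_abs] using hC2 u hu)) (le_max_right _ _)
  have hC0 : 0 ≤ C := le_trans hx0.le (hxC 0 ⟨le_refl 0, hT0⟩)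
  set K := C / γ + C + δ + c * ξ * C + 1 with hKdef
  have hKpos : 0 < K := by
    have h1 : 0 ≤ C / γ := div_nonneg hC0 hγ.le
    have h2 : 0 ≤ c * ξ * C := by positivity
    simp only [hKdef]; linarith
  -- x stays positive up to T
  have hxT : 0 < x T := by
    have hmono : MonotoneOn (fun u => x u * Real.exp (K * u)) (Set.Icc 0 T) := by
      apply monotoneOn_of_hasDerivWithinAt_nonneg (convex_Icc 0 T)
        (f' := fun u => (x u * (1 - x u / γ) - x u * y u / (1 + α * ξ + x u)) * Real.exp (K * u)
          + x u * (Real.exp (K * u) * K))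
      · exact (hcx.mono hIcc).mul (Real.continuous_exp.comp (continuous_const.mul continuous_id)).continuousOn
      · intro u hu
        rw [interior_Icc] at hu
        have he : HasDerivAt (fun u : ℝ => Real.exp (K * u)) (Real.exp (K * u) * K) u := by
          simpa using ((hasDerivAt_id u).const_mul K).exp
        exact ((hx u hu.1.le).mul he).hasDerivWithinAt
      · intro u hu
        rw [interior_Icc] at hu
        obtain ⟨hxu, hyu⟩ := hbefore u hu.1.le hu.2
        have hxuC : x u ≤ C := hxC u ⟨hu.1.le, hu.2.le⟩
        have hyuC : y u ≤ C := hyC u ⟨hu.1.le, hu.2.le⟩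
        have hD : (1:ℝ) ≤ 1 + α * ξ + x u := by nlinarith [mul_pos hα hξ]
        have hDpos : (0:ℝ) < 1 + α * ξ + x u := by linarith
        have hexp : 0 < Real.exp (K * u) := Real.exp_pos _
        -- x u * y u / D = x u * (y u / D)
        have hdiv : x u * y u / (1 + α * ξ + x u) = x u * (y u / (1 + α * ξ + x u)) :=
          mul_div_assoc _ _ _
        have hyd : y u / (1 + α * ξ + x u) ≤ C :=
          le_trans (div_le_self hyu.le hD) hyuC
        have hyd0 : 0 ≤ y u / (1 + α * ξ + x u) := div_nonneg hyu.le hDpos.le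
        have hxg : x u / γ ≤ C / γ := by gcongr
        -- key: x' + K * x ≥ 0
        have hkey : 0 ≤ (x u * (1 - x u / γ) - x u * y u / (1 + α * ξ + x u)) + K * x u := by
          rw [hdiv]
          have : 0 ≤ x u * ((1 - x u / γ) - y u / (1 + α * ξ + x u) + K) := by
            apply mul_nonneg hxu.le
            have h2 : 0 ≤ c * ξ * C := by positivity
            simp only [hKdef]; linarith [hxg, hyd]
          linarith [this]
        nlinarith [mul_nonneg hkey hexp.le]
    have := hmono (Set.left_mem_Icc.2 hT0) (Set.right_mem_Icc.2 hT0) hT0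
    simp only [mul_zero, Real.exp_zero, mul_one] at this
    nlinarith [Real.exp_pos (K * T), hx0]
  -- y stays positive up to T
  have hyT : 0 < y T := by
    have hmono : MonotoneOn (fun u => y u * Real.exp (K * u)) (Set.Icc 0 T) := by
      apply monotoneOn_of_hasDerivWithinAt_nonneg (convex_Icc 0 T)
        (f' := fun u => (β * x u * y u / (1 + α * ξ + x u) + β * ξ * y u / (1 + α * ξ + x u)
            - δ * y u - c * ξ * (y u) ^ 2) * Real.exp (K * u)
          + y u * (Real.exp (K * u) * K))
      · exact (hcy.mono hIcc).mul (Real.continuous_exp.comp (continuous_const.mul continuous_id)).continuousOn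
      · intro u hu
        rw [interior_Icc] at hu
        have he : HasDerivAt (fun u : ℝ => Real.exp (K * u)) (Real.exp (K * u) * K) u := by
          simpa using ((hasDerivAt_id u).const_mul K).exp
        exact ((hy u hu.1.le).mul he).hasDerivWithinAt
      · intro u hu
        rw [interior_Icc] at hu
        obtain ⟨hxu, hyu⟩ := hbefore u hu.1.le hu.2
        have hyuC : y u ≤ C := hyC u ⟨hu.1.le, hu.2.le⟩
        have hDpos : (0:ℝ) < 1 + α * ξ + x u := by nlinarith [mul_pos hα hξ]
        have hexp : 0 < Real.exp (K * u) := Real.exp_pos _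
        have h1 : 0 ≤ β * x u * y u / (1 + α * ξ + x u) := by positivity
        have h2 : 0 ≤ β * ξ * y u / (1 + α * ξ + x u) := by positivity
        have h3 : c * ξ * (y u) ^ 2 ≤ c * ξ * C * y u := by
          nlinarith [mul_le_mul_of_nonneg_left (mul_le_mul_of_nonneg_right hyuC hyu.le) (mul_pos hc hξ).le]
        have hkey : 0 ≤ (β * x u * y u / (1 + α * ξ + x u) + β * ξ * y u / (1 + α * ξ + x u)
            - δ * y u - c * ξ * (y u) ^ 2) + K * y u := by
          have h4 : 0 ≤ (C / γ + C + 1) * y u := by positivity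
          simp only [hKdef]
          linarith [h1, h2, h3, h4]
        nlinarith [mul_nonneg hkey hexp.le]
    have := hmono (Set.left_mem_Icc.2 hT0) (Set.right_mem_Icc.2 hT0) hT0
    simp only [mul_zero, Real.exp_zero, mul_one] at this
    nlinarith [Real.exp_pos (K * T), hy0]
  rcases hTS with hmem | hmem
  · exact absurd hmem.2 (not_le.2 hxT)
  · exact absurd hmem.2 (not_le.2 hyT)

/-- **Lemma lem:ugp.**
For the additional-food predator-pest system with predator competition (AFC)
  dx/dt = x(1 − x/γ) − x y/(1 + αξ + x),
  dy/dt = β x y/(1 + αξ + x) + β ξ y/(1 + αξ + x) − δ y − cξ y²,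
with γ, α, β, δ, ξ, c > 0, β − δα > 0 and ξ > δ/(β − δα), every solution with
positive initial data remains bounded for all time. -/
theorem stmt_1 (γ α β δ ξ c : ℝ)
    (hγ : 0 < γ) (hα : 0 < α) (hβ : 0 < β) (hδ : 0 < δ) (hξ : 0 < ξ) (hc : 0 < c)
    (hqual : 0 < β - δ * α)
    (hcrit : δ / (β - δ * α) < ξ)
    (x y : ℝ → ℝ)
    (hx : ∀ t : ℝ, 0 ≤ t →
      HasDerivAt x (x t * (1 - x t / γ) - x t * y t / (1 + α * ξ + x t)) t)
    (hy : ∀ t : ℝ, 0 ≤ t →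
      HasDerivAt y (β * x t * y t / (1 + α * ξ + x t)
        + β * ξ * y t / (1 + α * ξ + x t) - δ * y t - c * ξ * (y t) ^ 2) t)
    (hx0 : 0 < x 0) (hy0 : 0 < y 0) :
    ∃ M : ℝ, 0 < M ∧ ∀ t : ℝ, 0 ≤ t →
      0 ≤ x t ∧ x t ≤ M ∧ 0 ≤ y t ∧ y t ≤ M := by
  have hpos := pos_lemma γ α β δ ξ c hγ hα hβ hδ hξ hc x y hx hy hx0 hy0
  set Mx := max (x 0) γ with hMx
  set My := max (y 0) ((β + β * ξ) / (c * ξ)) with hMy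
  have hxbound : ∀ t : ℝ, 0 ≤ t → x t ≤ Mx := by
    apply barrier_lemma x _ Mx hx (le_max_left _ _)
    intro t ht hMt
    obtain ⟨hxt, hyt⟩ := hpos t ht
    have hγx : γ < x t := lt_of_le_of_lt (le_max_right _ _) hMt
    have hDpos : (0:ℝ) < 1 + α * ξ + x t := by nlinarith [mul_pos hα hξ]
    have h1 : x t * (1 - x t / γ) ≤ 0 := by
      apply mul_nonpos_of_nonneg_of_nonpos hxt.le
      have : 1 ≤ x t / γ := (one_le_div hγ).2 hγx.le
      linarith
    have h2 : 0 ≤ x t * y t / (1 + α * ξ + x t) :=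
      div_nonneg (mul_nonneg hxt.le hyt.le) hDpos.le
    linarith
  have hybound : ∀ t : ℝ, 0 ≤ t → y t ≤ My := by
    apply barrier_lemma y _ My hy (le_max_left _ _)
    intro t ht hMt
    obtain ⟨hxt, hyt⟩ := hpos t ht
    have hDpos : (0:ℝ) < 1 + α * ξ + x t := by nlinarith [mul_pos hα hξ]
    have hD1 : (1:ℝ) ≤ 1 + α * ξ + x t := by nlinarith [mul_pos hα hξ]
    have hyt' : (β + β * ξ) / (c * ξ) < y t := lt_of_le_of_lt (le_max_right _ _) hMt
    have hcy : β + β * ξ ≤ c * ξ * y t := by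
      rw [div_lt_iff₀ (mul_pos hc hξ)] at hyt'
      nlinarith
    have h1 : β * x t * y t / (1 + α * ξ + x t) ≤ β * y t := by
      rw [div_le_iff₀ hDpos]
      nlinarith [mul_pos hβ hyt, mul_pos hα hξ, mul_pos (mul_pos hβ hyt) (mul_pos hα hξ)]
    have h2 : β * ξ * y t / (1 + α * ξ + x t) ≤ β * ξ * y t :=
      div_le_self (by positivity) hD1
    have h3 : (β * y t + β * ξ * y t) - c * ξ * (y t) ^ 2 ≤ 0 := by
      have : β + β * ξ - c * ξ * y t ≤ 0 := by linarith
      nlinarith [this, hyt]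
    have h4 : 0 ≤ δ * y t := by positivity
    linarith
  refine ⟨max Mx My, lt_of_lt_of_le (lt_of_lt_of_le hx0 (le_max_left _ _)) (le_max_left _ _), ?_⟩
  intro t ht
  obtain ⟨hxt, hyt⟩ := hpos t ht
  exact ⟨hxt.le, le_trans (hxbound t ht) (le_max_left _ _), hyt.le,
    le_trans (hybound t ht) (le_max_right _ _)⟩
end

section
/- Let γ, α, β, δ, ξ, c > 0 with β − δα > 0, β > δ and ξ > δ/(β − δα). Then the Jacobian of system (AFC) at the predator-free state (γ, 0) has determinant −[β(γ + ξ) − δ(1 + αξ + γ)]/(1 + αξ + γ), and this determinant is strictly negative, so (γ, 0) is a saddle. -/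
/-- **Lemma lem:lems1.**
For system (AFC) with γ, α, β, δ, ξ, c > 0, β − δα > 0, β > δ and
ξ > δ/(β − δα), the Jacobian at the predator-free state (γ, 0) has determinant
−[β(γ + ξ) − δ(1 + αξ + γ)]/(1 + αξ + γ), which is strictly negative, so
(γ, 0) is a saddle. -/
theorem stmt_4 (γ α β δ ξ c : ℝ)
    (hγ : 0 < γ) (hα : 0 < α) (hβ : 0 < β) (hδ : 0 < δ) (hξ : 0 < ξ) (hc : 0 < c)
    (hqual : 0 < β - δ * α) (hβδ : δ < β)
    (hcrit : δ / (β - δ * α) < ξ)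
    (J11 J12 J21 J22 : ℝ)
    (hJ11 : J11 = 1 - 2 * γ / γ - (1 + α * ξ) * 0 / (1 + α * ξ + γ) ^ 2)
    (hJ12 : J12 = -γ / (1 + α * ξ + γ))
    (hJ21 : J21 = (1 + α * ξ - ξ) * β * 0 / (1 + α * ξ + γ) ^ 2)
    (hJ22 : J22 = β * (γ + ξ) / (1 + α * ξ + γ) - δ - 2 * c * ξ * 0) :
    J11 * J22 - J12 * J21 =
        -((β * (γ + ξ) - δ * (1 + α * ξ + γ)) / (1 + α * ξ + γ)) ∧
      J11 * J22 - J12 * J21 < 0 := by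
  have hD : (0:ℝ) < 1 + α * ξ + γ := by positivity
  have hD' : (1 + α * ξ + γ) ≠ 0 := ne_of_gt hD
  have hγ' : γ ≠ 0 := ne_of_gt hγ
  have heq : J11 * J22 - J12 * J21 =
      -((β * (γ + ξ) - δ * (1 + α * ξ + γ)) / (1 + α * ξ + γ)) := by
    subst hJ11 hJ12 hJ21 hJ22
    field_simp
    ring
  refine ⟨heq, ?_⟩
  rw [heq]
  have hnum : 0 < β * (γ + ξ) - δ * (1 + α * ξ + γ) := by
    have h1 : δ < ξ * (β - δ * α) := by
      have := (div_lt_iff₀ hqual).mp hcrit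
      linarith
    nlinarith
  have : 0 < (β * (γ + ξ) - δ * (1 + α * ξ + γ)) / (1 + α * ξ + γ) :=
    div_pos hnum hD
  linarith
end

section
/- Let γ, α, β, δ, ξ, c > 0 with β > δ, β − δα > 0, 0 < α < 1 and δ/(β − δα) < ξ < 1/(1 − α), and let y* = ((β − δα)ξ − δ)/(cξ(1 + αξ)). If c > c₃* := ((β − δα)ξ − δ)/(ξ(1 + αξ)²), then y* < 1 + αξ, so the determinant of the Jacobian of (AFC) at (0, y*) is negative and the pest-free state is a saddle. If instead c₂* := 4γ(β − δ)/(ξ(1 + αξ + γ)²) < c < c₃*, then y* > 1 + αξ (so (0, y*) is locally asymptotically stable) and the maximum value (1 + αξ + γ)²/(4γ) of the prey nullcline strictly exceeds the horizontal asymptote (β − δ)/(cξ) of the predator nullcline. -/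
/-- **Theorem thm:1o3, threshold structure, concave-down case.**
For system (AFC) with γ, α, β, δ, ξ, c > 0, β > δ, β − δα > 0, 0 < α < 1 and
δ/(β − δα) < ξ < 1/(1 − α), with y* = ((β − δα)ξ − δ)/(cξ(1 + αξ)):
if c > c₃* = ((β − δα)ξ − δ)/(ξ(1 + αξ)²), then y* < 1 + αξ, the determinant
−(1 − y*/(1 + αξ))y* of the Jacobian at (0, y*) is negative, and the
pest-free state is a saddle; if c₂* = 4γ(β − δ)/(ξ(1 + αξ + γ)²) < c < c₃*,
then y* > 1 + αξ (locally asymptotically stable pest-free state) and the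
maximum (1 + αξ + γ)²/(4γ) of the prey nullcline strictly exceeds the
horizontal asymptote (β − δ)/(cξ) of the predator nullcline. -/
theorem stmt_6 (γ α β δ ξ c : ℝ)
    (hγ : 0 < γ) (hα : 0 < α) (hβ : 0 < β) (hδ : 0 < δ) (hξ : 0 < ξ) (hc : 0 < c)
    (hβδ : δ < β) (hqual : 0 < β - δ * α) (hα1 : α < 1)
    (hξlo : δ / (β - δ * α) < ξ) (hξhi : ξ < 1 / (1 - α))
    (ystar : ℝ)
    (hystar : ystar = ((β - δ * α) * ξ - δ) / (c * ξ * (1 + α * ξ))) :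
    (((β - δ * α) * ξ - δ) / (ξ * (1 + α * ξ) ^ 2) < c →
      ystar < 1 + α * ξ ∧ -(1 - ystar / (1 + α * ξ)) * ystar < 0) ∧
    (4 * γ * (β - δ) / (ξ * (1 + α * ξ + γ) ^ 2) < c ∧
        c < ((β - δ * α) * ξ - δ) / (ξ * (1 + α * ξ) ^ 2) →
      1 + α * ξ < ystar ∧
        (β - δ) / (c * ξ) < (1 + α * ξ + γ) ^ 2 / (4 * γ)) := by

  have h1x : 0 < 1 + α * ξ := by positivity
  have hN : 0 < (β - δ * α) * ξ - δ := by
    have := (div_lt_iff₀ hqual).mp hξlo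
    nlinarith
  refine ⟨fun h3 => ?_, fun ⟨h2, h3⟩ => ?_⟩
  · have hc' : (β - δ * α) * ξ - δ < c * (ξ * (1 + α * ξ) ^ 2) :=
      (div_lt_iff₀ (by positivity)).mp h3
    have hy : ystar < 1 + α * ξ := by
      rw [hystar, div_lt_iff₀ (by positivity)]
      nlinarith
    have hy0 : 0 < ystar := by
      rw [hystar]; positivity
    refine ⟨hy, ?_⟩
    have : 0 < 1 - ystar / (1 + α * ξ) := by
      have := (div_lt_one h1x).mpr hy
      linarith
    nlinarith
  · have hc' : c * (ξ * (1 + α * ξ) ^ 2) < (β - δ * α) * ξ - δ :=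
      (lt_div_iff₀ (by positivity)).mp h3
    constructor
    · rw [hystar, lt_div_iff₀ (by positivity)]
      nlinarith
    · have hc2 : 4 * γ * (β - δ) < c * (ξ * (1 + α * ξ + γ) ^ 2) :=
        (div_lt_iff₀ (by positivity)).mp h2
      rw [div_lt_div_iff₀ (by positivity) (by positivity)]
      nlinarith
end

section
/- Let γ, α, β, δ, ξ, c > 0 with c > 1/(2ξ(1 + αξ)). Then for all x > 0 and y > 0, the Dulac expression for system (AFC) with auxiliary function φ(x,y) = 1/(xy) is strictly negative: −1/(γ y) + 1/(1 + αξ + x)² − cξ/x < 0. -/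
/-- **Dulac criterion computation from Theorem thm:gloint.**
For system (AFC) with γ, α, β, δ, ξ, c > 0 and c > 1/(2ξ(1 + αξ)), the Dulac
expression with auxiliary function φ(x,y) = 1/(xy), namely
−1/(γy) + 1/(1 + αξ + x)² − cξ/x, is strictly negative for all x, y > 0. -/
theorem stmt_7 (γ α β δ ξ c : ℝ)
    (hγ : 0 < γ) (hα : 0 < α) (hβ : 0 < β) (hδ : 0 < δ) (hξ : 0 < ξ) (hc : 0 < c)
    (hcbig : 1 / (2 * ξ * (1 + α * ξ)) < c) :
    ∀ x y : ℝ, 0 < x → 0 < y →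
      -(1 / (γ * y)) + 1 / (1 + α * ξ + x) ^ 2 - c * ξ / x < 0 := by
  intro x y hx hy
  have hA0 : (0:ℝ) < 1 + α * ξ := by positivity
  have hA : (0:ℝ) < 1 + α * ξ + x := by linarith
  have hA2 : (0:ℝ) < (1 + α * ξ + x) ^ 2 := by positivity
  have hc' : 1 < c * (2 * ξ * (1 + α * ξ)) := by
    rwa [div_lt_iff₀ (by positivity)] at hcbig
  have hamgm : (1 + α * ξ + x) ^ 2 ≥ 4 * (1 + α * ξ) * x := by
    nlinarith [sq_nonneg (1 + α * ξ - x)]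
  have key : 1 / (1 + α * ξ + x) ^ 2 < c * ξ / x := by
    rw [div_lt_div_iff₀ hA2 hx]
    nlinarith [mul_pos hc hξ, mul_pos (mul_pos hc hξ) hx]
  have hpos : (0:ℝ) < 1 / (γ * y) := by positivity
  linarith
end

section
/- Let γ, α, β, δ, ξ, c > 0 with β > δ, β − δα > 0, 0 < α < 1 and ξ > max(1/(1 − α), δ/(β − δα)). If c < 4γ(β − δ)/(ξ(1 + αξ + γ)²), then the horizontal asymptote (β − δ)/(cξ) of the predator nullcline strictly exceeds the maximum value (1 + αξ + γ)²/(4γ) of the prey nullcline, g(x) > f(x) for all x ≥ 0, and consequently system (AFC) has no interior equilibrium. -/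
/-- **global stability of the pest-free state, concave-up case.**
For system (AFC) with γ, α, β, δ, ξ, c > 0, β > δ, β − δα > 0, 0 < α < 1,
ξ > max(1/(1 − α), δ/(β − δα)) and c < 4γ(β − δ)/(ξ(1 + αξ + γ)²), the
horizontal asymptote (β − δ)/(cξ) of the predator nullcline
g(x) = β(x + ξ)/(cξ(1 + αξ + x)) − δ/(cξ) strictly exceeds the maximum value
(1 + αξ + γ)²/(4γ) of the prey nullcline f(x) = (1 − x/γ)(1 + αξ + x),
g(x) > f(x) for all x ≥ 0, and the system has no interior equilibrium. -/
theorem stmt_11 (γ α β δ ξ c : ℝ)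
    (hγ : 0 < γ) (hα : 0 < α) (hβ : 0 < β) (hδ : 0 < δ) (hξ : 0 < ξ) (hc : 0 < c)
    (hβδ : δ < β) (hqual : 0 < β - δ * α) (hα1 : α < 1)
    (hξbig : max (1 / (1 - α)) (δ / (β - δ * α)) < ξ)
    (hcsmall : c < 4 * γ * (β - δ) / (ξ * (1 + α * ξ + γ) ^ 2)) :
    (1 + α * ξ + γ) ^ 2 / (4 * γ) < (β - δ) / (c * ξ) ∧
    (∀ x : ℝ, 0 ≤ x →
      (1 - x / γ) * (1 + α * ξ + x) <
        β * (x + ξ) / (c * ξ * (1 + α * ξ + x)) - δ / (c * ξ)) ∧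
    (¬ ∃ xs ys : ℝ, 0 < xs ∧ 0 < ys ∧
        xs * (1 - xs / γ) - xs * ys / (1 + α * ξ + xs) = 0 ∧
        β * xs * ys / (1 + α * ξ + xs) + β * ξ * ys / (1 + α * ξ + xs)
          - δ * ys - c * ξ * ys ^ 2 = 0) := by
  have h1α : (0:ℝ) < 1 - α := by linarith
  have hξ1 : 1 / (1 - α) < ξ := lt_of_le_of_lt (le_max_left _ _) hξbig
  have hξα : 1 + α * ξ < ξ := by
    have := (div_lt_iff₀ h1α).mp hξ1
    nlinarith
  have hS : 0 < 1 + α * ξ + γ := by positivity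
  have hcξ : 0 < c * ξ := mul_pos hc hξ
  -- cleared form of hcsmall
  have hprod : c * ξ * (1 + α * ξ + γ) ^ 2 < 4 * γ * (β - δ) := by
    have h := (lt_div_iff₀ (by positivity : (0:ℝ) < ξ * (1 + α * ξ + γ) ^ 2)).mp hcsmall
    nlinarith [h]
  have part1 : (1 + α * ξ + γ) ^ 2 / (4 * γ) < (β - δ) / (c * ξ) := by
    rw [div_lt_div_iff₀ (by positivity) hcξ]
    nlinarith [hprod]
  have part2 : ∀ x : ℝ, 0 ≤ x →
      (1 - x / γ) * (1 + α * ξ + x) <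
        β * (x + ξ) / (c * ξ * (1 + α * ξ + x)) - δ / (c * ξ) := by
    intro x hx
    have hD : 0 < 1 + α * ξ + x := by positivity
    -- f(x) ≤ max value
    have hfM : (1 - x / γ) * (1 + α * ξ + x) ≤ (1 + α * ξ + γ) ^ 2 / (4 * γ) := by
      rw [le_div_iff₀ (by positivity : (0:ℝ) < 4 * γ)]
      have h1 : (1 - x / γ) * (1 + α * ξ + x) * (4 * γ) = (γ - x) * (1 + α * ξ + x) * 4 := by
        field_simp
      rw [h1]
      nlinarith [sq_nonneg (γ - x - (1 + α * ξ + x))]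
    -- asymptote < g(x)
    have hAg : (β - δ) / (c * ξ) < β * (x + ξ) / (c * ξ * (1 + α * ξ + x)) - δ / (c * ξ) := by
      rw [show β * (x + ξ) / (c * ξ * (1 + α * ξ + x)) - δ / (c * ξ)
            = (β * (x + ξ) - δ * (1 + α * ξ + x)) / (c * ξ * (1 + α * ξ + x)) from by
          field_simp]
      rw [div_lt_div_iff₀ hcξ (by positivity)]
      nlinarith [mul_pos (mul_pos hcξ hβ) (show (0:ℝ) < ξ - (1 + α * ξ) by linarith)]
    linarith
  refine ⟨part1, part2, ?_⟩
  rintro ⟨xs, ys, hxs, hys, e1, e2⟩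
  have hD : 0 < 1 + α * ξ + xs := by positivity
  have hDne : (1 + α * ξ + xs) ≠ 0 := ne_of_gt hD
  -- from e1 : ys = f(xs)
  have hfac1 : xs * ((1 - xs / γ) - ys / (1 + α * ξ + xs)) = 0 := by
    rw [mul_sub]
    rw [mul_div_assoc] at e1
    linarith [e1]
  have h01 : (1 - xs / γ) - ys / (1 + α * ξ + xs) = 0 :=
    (mul_eq_zero.mp hfac1).resolve_left (ne_of_gt hxs)
  have hA : ys = (1 - xs / γ) * (1 + α * ξ + xs) := by
    have h : (1 - xs / γ) = ys / (1 + α * ξ + xs) := by linarith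
    rw [h, div_mul_cancel₀ _ hDne]
  -- from e2 : c ξ ys = β(xs+ξ)/D − δ
  have hfac2 : ys * (β * xs / (1 + α * ξ + xs) + β * ξ / (1 + α * ξ + xs)
      - δ - c * ξ * ys) = 0 := by
    have : ys * (β * xs / (1 + α * ξ + xs) + β * ξ / (1 + α * ξ + xs)
        - δ - c * ξ * ys) = β * xs * ys / (1 + α * ξ + xs)
        + β * ξ * ys / (1 + α * ξ + xs) - δ * ys - c * ξ * ys ^ 2 := by
      field_simp
    rw [this]; exact e2
  have h02 : β * xs / (1 + α * ξ + xs) + β * ξ / (1 + α * ξ + xs)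
      - δ - c * ξ * ys = 0 :=
    (mul_eq_zero.mp hfac2).resolve_left (ne_of_gt hys)
  have hB : β * (xs + ξ) / (c * ξ * (1 + α * ξ + xs)) - δ / (c * ξ) = ys := by
    have h4 : β * xs / (1 + α * ξ + xs) + β * ξ / (1 + α * ξ + xs) = δ + c * ξ * ys := by
      linarith
    have h5 : β * (xs + ξ) / (c * ξ * (1 + α * ξ + xs)) - δ / (c * ξ)
        = (β * xs / (1 + α * ξ + xs) + β * ξ / (1 + α * ξ + xs) - δ) / (c * ξ) := by
      field_simp
    rw [h5, h4, show δ + c * ξ * ys - δ = c * ξ * ys by ring,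
      mul_div_cancel_left₀ ys (ne_of_gt hcξ)]
  have := part2 xs (le_of_lt hxs)
  linarith [this, hA, hB]
end

section
/- Let γ, α, β, δ, ξ, c > 0. If β(γ + ξ) ≤ δ(1 + αξ), then system (AFC) has no interior equilibrium. Moreover, in all cases (AFC) has at most three interior equilibria, since the x-coordinate of any interior equilibrium is a root of the cubic cξ x³ + [2cξ(1 + αξ) − cξγ] x² + [cξ(1 + αξ)² − 2γcξ(1 + αξ) + γ(β − δ)] x + [βγξ − γcξ(1 + αξ)² − δγ(1 + αξ)] = 0. -/
/-- **existence/number of interior equilibria.**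
For system (AFC) with γ, α, β, δ, ξ, c > 0: if β(γ + ξ) ≤ δ(1 + αξ) then there
is no interior equilibrium; moreover the x-coordinate of any interior
equilibrium is a root of the cubic
cξ x³ + [2cξ(1 + αξ) − cξγ] x² + [cξ(1 + αξ)² − 2γcξ(1 + αξ) + γ(β − δ)] x
+ [βγξ − γcξ(1 + αξ)² − δγ(1 + αξ)] = 0,
and there are at most three interior equilibria. -/
theorem stmt_13 (γ α β δ ξ c : ℝ)
    (hγ : 0 < γ) (hα : 0 < α) (hβ : 0 < β) (hδ : 0 < δ) (hξ : 0 < ξ) (hc : 0 < c) :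
    (β * (γ + ξ) ≤ δ * (1 + α * ξ) →
      ¬ ∃ xs ys : ℝ, 0 < xs ∧ 0 < ys ∧
        xs * (1 - xs / γ) - xs * ys / (1 + α * ξ + xs) = 0 ∧
        β * xs * ys / (1 + α * ξ + xs) + β * ξ * ys / (1 + α * ξ + xs)
          - δ * ys - c * ξ * ys ^ 2 = 0) ∧
    (∀ xs ys : ℝ, 0 < xs → 0 < ys →
      xs * (1 - xs / γ) - xs * ys / (1 + α * ξ + xs) = 0 →
      β * xs * ys / (1 + α * ξ + xs) + β * ξ * ys / (1 + α * ξ + xs)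
        - δ * ys - c * ξ * ys ^ 2 = 0 →
      c * ξ * xs ^ 3 + (2 * c * ξ * (1 + α * ξ) - c * ξ * γ) * xs ^ 2
        + (c * ξ * (1 + α * ξ) ^ 2 - 2 * γ * c * ξ * (1 + α * ξ)
            + γ * (β - δ)) * xs
        + (β * γ * ξ - γ * c * ξ * (1 + α * ξ) ^ 2
            - δ * γ * (1 + α * ξ)) = 0) ∧
    ({p : ℝ × ℝ | 0 < p.1 ∧ 0 < p.2 ∧
        p.1 * (1 - p.1 / γ) - p.1 * p.2 / (1 + α * ξ + p.1) = 0 ∧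
        β * p.1 * p.2 / (1 + α * ξ + p.1) + β * ξ * p.2 / (1 + α * ξ + p.1)
          - δ * p.2 - c * ξ * p.2 ^ 2 = 0}.encard ≤ 3) := by
  -- key facts at any interior equilibrium
  have key : ∀ xs ys : ℝ, 0 < xs → 0 < ys →
      xs * (1 - xs / γ) - xs * ys / (1 + α * ξ + xs) = 0 →
      β * xs * ys / (1 + α * ξ + xs) + β * ξ * ys / (1 + α * ξ + xs)
        - δ * ys - c * ξ * ys ^ 2 = 0 →
      ys * γ = (γ - xs) * (1 + α * ξ + xs) ∧
      β * (xs + ξ) = (δ + c * ξ * ys) * (1 + α * ξ + xs) := by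
    intro xs ys hx hy e1 e2
    have hD : (0:ℝ) < 1 + α * ξ + xs := by positivity
    have e1' : xs * ((γ - xs) * (1 + α * ξ + xs)) = xs * (ys * γ) := by
      field_simp at e1; linarith [e1]
    have e2' : ys * (β * (xs + ξ)) = ys * ((δ + c * ξ * ys) * (1 + α * ξ + xs)) := by
      field_simp at e2; nlinarith [e2]
    constructor
    · exact (mul_left_cancel₀ hx.ne' e1').symm
    · exact mul_left_cancel₀ hy.ne' e2'
  have part2 : ∀ xs ys : ℝ, 0 < xs → 0 < ys →
      xs * (1 - xs / γ) - xs * ys / (1 + α * ξ + xs) = 0 →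
      β * xs * ys / (1 + α * ξ + xs) + β * ξ * ys / (1 + α * ξ + xs)
        - δ * ys - c * ξ * ys ^ 2 = 0 →
      c * ξ * xs ^ 3 + (2 * c * ξ * (1 + α * ξ) - c * ξ * γ) * xs ^ 2
        + (c * ξ * (1 + α * ξ) ^ 2 - 2 * γ * c * ξ * (1 + α * ξ)
            + γ * (β - δ)) * xs
        + (β * γ * ξ - γ * c * ξ * (1 + α * ξ) ^ 2
            - δ * γ * (1 + α * ξ)) = 0 := by
    intro xs ys hx hy e1 e2
    obtain ⟨k1, k2⟩ := key xs ys hx hy e1 e2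
    linear_combination γ * k2 + c * ξ * (1 + α * ξ + xs) * k1
  refine ⟨?_, part2, ?_⟩
  · intro hle ⟨xs, ys, hx, hy, e1, e2⟩
    obtain ⟨k1, k2⟩ := key xs ys hx hy e1 e2
    have hD : (0:ℝ) < 1 + α * ξ + xs := by positivity
    have hxγ : xs < γ := by nlinarith
    nlinarith [mul_pos (mul_pos hc hξ) hy, mul_pos hδ hx]
  · -- at most three equilibria
    set S : Set (ℝ × ℝ) := {p : ℝ × ℝ | 0 < p.1 ∧ 0 < p.2 ∧
        p.1 * (1 - p.1 / γ) - p.1 * p.2 / (1 + α * ξ + p.1) = 0 ∧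
        β * p.1 * p.2 / (1 + α * ξ + p.1) + β * ξ * p.2 / (1 + α * ξ + p.1)
          - δ * p.2 - c * ξ * p.2 ^ 2 = 0} with hS
    set P : Polynomial ℝ :=
      Polynomial.C (c * ξ) * Polynomial.X ^ 3
        + Polynomial.C (2 * c * ξ * (1 + α * ξ) - c * ξ * γ) * Polynomial.X ^ 2
        + Polynomial.C (c * ξ * (1 + α * ξ) ^ 2 - 2 * γ * c * ξ * (1 + α * ξ)
            + γ * (β - δ)) * Polynomial.X
        + Polynomial.C (β * γ * ξ - γ * c * ξ * (1 + α * ξ) ^ 2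
            - δ * γ * (1 + α * ξ)) with hP
    have hPdeg : P.natDegree = 3 := Polynomial.natDegree_cubic (by positivity)
    have hPne : P ≠ 0 := by
      intro h; rw [h] at hPdeg; simp at hPdeg
    have hinj : Set.InjOn Prod.fst S := by
      intro p hp q hq hpq
      obtain ⟨hp1, hp2, hp3, hp4⟩ := hp
      obtain ⟨hq1, hq2, hq3, hq4⟩ := hq
      obtain ⟨kp, -⟩ := key p.1 p.2 hp1 hp2 hp3 hp4
      obtain ⟨kq, -⟩ := key q.1 q.2 hq1 hq2 hq3 hq4
      have : p.2 = q.2 := by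
        have h2 : p.2 * γ = q.2 * γ := by rw [kp, kq, hpq]
        exact mul_right_cancel₀ hγ.ne' h2
      exact Prod.ext hpq this
    have hsub : Prod.fst '' S ⊆ ↑P.roots.toFinset := by
      rintro x ⟨p, hp, rfl⟩
      obtain ⟨hp1, hp2, hp3, hp4⟩ := hp
      have hroot := part2 p.1 p.2 hp1 hp2 hp3 hp4
      simp only [Multiset.mem_toFinset, Finset.coe_sort_coe, Finset.mem_coe,
        Polynomial.mem_roots', Polynomial.IsRoot]
      refine ⟨hPne, ?_⟩
      simp only [hP, Polynomial.eval_add, Polynomial.eval_mul, Polynomial.eval_pow,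
        Polynomial.eval_C, Polynomial.eval_X]
      linear_combination hroot
    calc S.encard = (Prod.fst '' S).encard := (hinj.encard_image).symm
      _ ≤ (↑P.roots.toFinset : Set ℝ).encard := Set.encard_mono hsub
      _ = (P.roots.toFinset.card : ℕ∞) := Set.encard_coe_eq_coe_finsetCard _
      _ ≤ (3 : ℕ) := by
          have h1 : P.roots.toFinset.card ≤ Multiset.card P.roots :=
            Multiset.toFinset_card_le _
          have h2 : Multiset.card P.roots ≤ P.natDegree := Polynomial.card_roots' P
          exact_mod_cast le_trans h1 (hPdeg ▸ h2)
      _ = 3 := by norm_num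
end

section
/- Let γ, α, β, δ, ξ, c > 0 with 0 < α < 1, ξ > 1/(1 − α) and γ < 1 + αξ. The slope of the prey nullcline at x = 0 is f′(0) = 1 − (1 + αξ)/γ and the slope of the predator nullcline at x = 0 is g′(0) = β(1 + αξ − ξ)/(cξ(1 + αξ)²), and these two slopes are equal if and only if c = c* := βγ(1 + αξ − ξ)/(ξ(1 + αξ)²[γ − (1 + αξ)]); moreover c* > 0 (this is the pitchfork bifurcation value of the competition parameter). -/
/-!
Both slopes follow from the product and quotient rules. Clearing denominators, the equality of
slopes is linear in `c`, which gives `c*`. Its sign: `ξ > 1/(1 - α)` means `1 + αξ < ξ`, so the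
numerator of `c*` is negative, and `γ < 1 + αξ` makes its denominator negative as well.
-/

theorem deriv_prey_nullcline_zero (γ A : ℝ) :
    deriv (fun x : ℝ => (1 - x / γ) * (A + x)) 0 = 1 - A / γ := by
  have hprey : HasDerivAt (fun x : ℝ => (1 - x / γ) * (A + x))
      (-(1 / γ) * (A + 0) + (1 - 0 / γ) * 1) 0 :=
    (((hasDerivAt_id 0).div_const γ).const_sub 1).mul ((hasDerivAt_id 0).const_add A)
  rw [hprey.deriv]
  ring

theorem deriv_predator_nullcline_zero (β ξ K A d : ℝ) (hK : K ≠ 0) (hA : A ≠ 0) :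
    deriv (fun x : ℝ => β * (x + ξ) / (K * (A + x)) - d) 0
      = β * (A - ξ) / (K * A ^ 2) := by
  have hnum : HasDerivAt (fun x : ℝ => β * (x + ξ)) (β * 1) 0 :=
    ((hasDerivAt_id 0).add_const ξ).const_mul β
  have hden : HasDerivAt (fun x : ℝ => K * (A + x)) (K * 1) 0 :=
    ((hasDerivAt_id 0).const_add A).const_mul K
  have hquot : HasDerivAt (fun x : ℝ => β * (x + ξ) / (K * (A + x)) - d)
      ((β * 1 * (K * (A + 0)) - β * (0 + ξ) * (K * 1)) / (K * (A + 0)) ^ 2) 0 :=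
    (hnum.div hden (by simpa using mul_ne_zero hK hA)).sub_const d
  rw [hquot.deriv, add_zero, zero_add]
  field_simp

theorem slopes_eq_iff (β γ ξ c A : ℝ) (hγ : γ ≠ 0) (hξ : ξ ≠ 0) (hc : c ≠ 0) (hA : A ≠ 0)
    (hγA : γ - A ≠ 0) :
    1 - A / γ = β * (A - ξ) / (c * ξ * A ^ 2) ↔
      c = β * γ * (A - ξ) / (ξ * A ^ 2 * (γ - A)) := by
  rw [one_sub_div hγ, div_eq_div_iff hγ (by positivity), eq_div_iff (by positivity)]
  constructor <;> intro h <;> linarith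

theorem one_add_mul_lt_of_one_div_one_sub_lt {α ξ : ℝ} (hα1 : α < 1)
    (hξ : 1 / (1 - α) < ξ) : 1 + α * ξ < ξ := by
  have := (div_lt_iff₀ (sub_pos.mpr hα1)).mp hξ
  linarith

theorem stmt_15_general (γ α β δ ξ c : ℝ)
    (hγ : 0 < γ) (hα : 0 < α) (hβ : 0 < β) (hξ : 0 < ξ) (hc : 0 < c)
    (hα1 : α < 1) (hξbig : 1 / (1 - α) < ξ) (hγsmall : γ < 1 + α * ξ)
    (cstar : ℝ)
    (hcstar : cstar = β * γ * (1 + α * ξ - ξ) /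
      (ξ * (1 + α * ξ) ^ 2 * (γ - (1 + α * ξ)))) :
    deriv (fun x : ℝ => (1 - x / γ) * (1 + α * ξ + x)) 0
        = 1 - (1 + α * ξ) / γ ∧
    deriv (fun x : ℝ => β * (x + ξ) / (c * ξ * (1 + α * ξ + x)) - δ / (c * ξ)) 0
        = β * (1 + α * ξ - ξ) / (c * ξ * (1 + α * ξ) ^ 2) ∧
    (1 - (1 + α * ξ) / γ = β * (1 + α * ξ - ξ) / (c * ξ * (1 + α * ξ) ^ 2) ↔
      c = cstar) ∧
    0 < cstar := by
  have hA : 0 < 1 + α * ξ := by positivity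
  have hγA : γ - (1 + α * ξ) < 0 := by linarith
  have hAξ : 1 + α * ξ - ξ < 0 := by linarith [one_add_mul_lt_of_one_div_one_sub_lt hα1 hξbig]
  subst hcstar
  refine ⟨deriv_prey_nullcline_zero γ _,
    deriv_predator_nullcline_zero β ξ (c * ξ) _ _ (by positivity) hA.ne',
    slopes_eq_iff β γ ξ c _ hγ.ne' hξ.ne' hc.ne' hA.ne' hγA.ne, ?_⟩
  exact div_pos_of_neg_of_neg (mul_neg_of_pos_of_neg (by positivity) hAξ)
    (mul_neg_of_pos_of_neg (by positivity) hγA)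

/-- **Theorem thm:pc1, pitchfork bifurcation value.**
For system (AFC) with γ, α, β, δ, ξ, c > 0, 0 < α < 1, ξ > 1/(1 − α) and
γ < 1 + αξ: the slope of the prey nullcline f(x) = (1 − x/γ)(1 + αξ + x) at
x = 0 is 1 − (1 + αξ)/γ, the slope of the predator nullcline
g(x) = β(x + ξ)/(cξ(1 + αξ + x)) − δ/(cξ) at x = 0 is
β(1 + αξ − ξ)/(cξ(1 + αξ)²), these slopes are equal if and only if
c = c* = βγ(1 + αξ − ξ)/(ξ(1 + αξ)²[γ − (1 + αξ)]), and c* > 0. -/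
theorem stmt_15 (γ α β δ ξ c : ℝ)
    (hγ : 0 < γ) (hα : 0 < α) (hβ : 0 < β) (hδ : 0 < δ) (hξ : 0 < ξ) (hc : 0 < c)
    (hα1 : α < 1) (hξbig : 1 / (1 - α) < ξ) (hγsmall : γ < 1 + α * ξ)
    (cstar : ℝ)
    (hcstar : cstar = β * γ * (1 + α * ξ - ξ) /
      (ξ * (1 + α * ξ) ^ 2 * (γ - (1 + α * ξ)))) :
    deriv (fun x : ℝ => (1 - x / γ) * (1 + α * ξ + x)) 0
        = 1 - (1 + α * ξ) / γ ∧
    deriv (fun x : ℝ => β * (x + ξ) / (c * ξ * (1 + α * ξ + x)) - δ / (c * ξ)) 0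
        = β * (1 + α * ξ - ξ) / (c * ξ * (1 + α * ξ) ^ 2) ∧
    (1 - (1 + α * ξ) / γ = β * (1 + α * ξ - ξ) / (c * ξ * (1 + α * ξ) ^ 2) ↔
      c = cstar) ∧
    0 < cstar :=
  stmt_15_general γ α β δ ξ c hγ hα hβ hξ hc hα1 hξbig hγsmall cstar hcstar
end

section
/- Let γ, α, β, δ, ξ > 0 and consider system (AF) (i.e. system (AFC) with c = 0). At any interior equilibrium (x*, y*) with x* > 0, y* > 0, the Jacobian entry J₂₂ = β(x* + ξ)/(1 + αξ + x*) − δ equals 0; consequently J₁₁J₂₂ = 0 and the necessary condition J₁₁J₂₂ < 0 for diffusion-driven (Turing) instability fails, so no Turing instability occurs for any choice of parameters or diffusion coefficients. -/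
/-- **Lemma lem:l1233, no Turing instability without competition.**
For the additional-food system (AF) (i.e. (AFC) with c = 0), at any interior
equilibrium (x*, y*) the Jacobian entry J₂₂ = β(x* + ξ)/(1 + αξ + x*) − δ
vanishes; hence J₁₁J₂₂ = 0 and the necessary condition J₁₁J₂₂ < 0 for
diffusion-driven (Turing) instability fails. -/
theorem stmt_17 (γ α β δ ξ : ℝ)
    (hγ : 0 < γ) (hα : 0 < α) (hβ : 0 < β) (hδ : 0 < δ) (hξ : 0 < ξ)
    (xs ys : ℝ) (hxs : 0 < xs) (hys : 0 < ys)
    (heq1 : xs * (1 - xs / γ) - xs * ys / (1 + α * ξ + xs) = 0)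
    (heq2 : β * xs * ys / (1 + α * ξ + xs) + β * ξ * ys / (1 + α * ξ + xs)
      - δ * ys = 0) :
    β * (xs + ξ) / (1 + α * ξ + xs) - δ = 0 ∧
    (1 - 2 * xs / γ - (1 + α * ξ) * ys / (1 + α * ξ + xs) ^ 2) *
        (β * (xs + ξ) / (1 + α * ξ + xs) - δ) = 0 ∧
    ¬ ((1 - 2 * xs / γ - (1 + α * ξ) * ys / (1 + α * ξ + xs) ^ 2) *
        (β * (xs + ξ) / (1 + α * ξ + xs) - δ) < 0) := by
  have hD : (0:ℝ) < 1 + α * ξ + xs := by positivity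
  have h22 : β * (xs + ξ) / (1 + α * ξ + xs) - δ = 0 := by
    have h := heq2
    field_simp at h ⊢
    nlinarith [mul_pos hα hξ]
  refine ⟨h22, by rw [h22, mul_zero], by rw [h22, mul_zero]; exact lt_irrefl 0⟩
end
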